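/- arXiv:math/0303339 — 2 statements merged into one kernel-verified Lean document; each statement's English description precedes it below -/
import Mathlib

section
/- Almansi decomposition of harmonic functions: Let n ≥ 2 and let h be a Cl_n-valued harmonic function (Δh = 0) defined on an open neighbourhood of the closed ball cl B(0,R) in ℝⁿ. Then there exist left monogenic functions f₁ and f₂ defined on the open ball B(0,R) such that h(x) = x f₁(x) + f₂(x) for every x ∈ B(0,R), where x f₁(x) is the Clifford product of the vector x with f₁(x). -/
noncomputable section

open MeasureTheory
open scoped BoundedContinuousFunction

/-- Euclidean space `ℝⁿ`. -/
abbrev Ev (n : ℕ) := EuclideanSpace ℝ (Fin n)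

/-- The negative-definite quadratic form `x ↦ -‖x‖²` on `ℝⁿ`. -/
def Qn (n : ℕ) : QuadraticForm ℝ (Ev n) :=
  -(LinearMap.BilinMap.toQuadraticMap (innerₗ (Ev n)))

/-- The real Clifford algebra `Cl_n`, in which `e_i e_j + e_j e_i = -2 δ_{ij}` and
vectors `x ∈ ℝⁿ` satisfy `x² = -‖x‖²`. -/
abbrev Cl (n : ℕ) := CliffordAlgebra (Qn n)

/-- The embedding of vectors `ℝⁿ ⊆ Cl_n`. -/
def toCl (n : ℕ) (x : Ev n) : Cl n := CliffordAlgebra.ι (Qn n) x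

/-- The generators `e_i` of `Cl_n`. -/
def eCl (n : ℕ) (i : Fin n) : Cl n := toCl n (EuclideanSpace.single i 1)

/-! ### A norm on `Cl n`.
`Cl n` is finite dimensional, so all norms on it are equivalent and induce
the canonical topology; we fix one obtained from a linear embedding into a
space of bounded functions. -/

/-- Index type of a basis of `Cl n`. -/
def ClIdx (n : ℕ) : Type _ := Module.Basis.ofVectorSpaceIndex ℝ (Cl n)

instance (n : ℕ) : TopologicalSpace (ClIdx n) := ⊥
instance (n : ℕ) : DiscreteTopology (ClIdx n) := ⟨rfl⟩

/-- Finitely supported functions embed into bounded continuous functions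
(w.r.t. the discrete topology). -/
def finsuppToBCF (ι : Type*) [TopologicalSpace ι] [DiscreteTopology ι] :
    (ι →₀ ℝ) →ₗ[ℝ] (ι →ᵇ ℝ) where
  toFun f := BoundedContinuousFunction.ofNormedAddCommGroup f continuous_of_discreteTopology
    (∑ a ∈ f.support, ‖f a‖) (by
      intro x
      by_cases hx : x ∈ f.support
      · exact Finset.single_le_sum (fun a _ => norm_nonneg _) hx
      · rw [Finsupp.notMem_support_iff.mp hx]
        simpa using Finset.sum_nonneg (fun a _ => norm_nonneg (f a)))
  map_add' f g := by ext i; simp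
  map_smul' c f := by ext i; simp

lemma finsuppToBCF_injective (ι : Type*) [TopologicalSpace ι] [DiscreteTopology ι] :
    Function.Injective (finsuppToBCF ι) := by
  intro f g h
  ext i
  have := congrFun (congrArg DFunLike.coe h) i
  simpa [finsuppToBCF, BoundedContinuousFunction.coe_ofNormedAddCommGroup] using this

/-- A linear injection of `Cl n` into a normed space. -/
def clEmb (n : ℕ) : Cl n →ₗ[ℝ] (ClIdx n →ᵇ ℝ) :=
  (finsuppToBCF (ClIdx n)).comp (Module.Basis.ofVectorSpace ℝ (Cl n)).repr.toLinearMap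

lemma clEmb_injective (n : ℕ) : Function.Injective (clEmb n) :=
  (finsuppToBCF_injective (ClIdx n)).comp (Module.Basis.ofVectorSpace ℝ (Cl n)).repr.injective

instance (n : ℕ) : NormedAddCommGroup (Cl n) :=
  NormedAddCommGroup.induced (Cl n) (ClIdx n →ᵇ ℝ) (clEmb n) (clEmb_injective n)

instance (n : ℕ) : NormedSpace ℝ (Cl n) :=
  NormedSpace.induced ℝ (Cl n) (ClIdx n →ᵇ ℝ) (clEmb n)

/-! ### The Dirac operator -/

/-- The partial derivative `∂f/∂x_i` of a `Cl_n`-valued function. -/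
def pd (n : ℕ) (i : Fin n) (f : Ev n → Cl n) (x : Ev n) : Cl n :=
  fderiv ℝ f x (EuclideanSpace.single i 1)

/-- The Dirac operator `Df = Σᵢ eᵢ ∂f/∂xᵢ`. -/
def Dirac (n : ℕ) (f : Ev n → Cl n) : Ev n → Cl n :=
  fun x => ∑ i, eCl n i * pd n i f x

/-- The right Dirac operator `fD = Σᵢ (∂f/∂xᵢ) eᵢ`. -/
def DiracR (n : ℕ) (f : Ev n → Cl n) : Ev n → Cl n :=
  fun x => ∑ i, pd n i f x * eCl n i

/-- `f` is left monogenic (left Clifford holomorphic) on `U`: it is `C¹` with `Df = 0` there. -/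
def LeftMonogenicOn (n : ℕ) (f : Ev n → Cl n) (U : Set (Ev n)) : Prop :=
  ContDiffOn ℝ 1 f U ∧ ∀ x ∈ U, Dirac n f x = 0

/-- `g` is right monogenic on `U`: it is `C¹` with `gD = 0` there. -/
def RightMonogenicOn (n : ℕ) (g : Ev n → Cl n) (U : Set (Ev n)) : Prop :=
  ContDiffOn ℝ 1 g U ∧ ∀ x ∈ U, DiracR n g x = 0

/-- The Laplacian of a `Cl_n`-valued function. -/
def Lap (n : ℕ) (f : Ev n → Cl n) (x : Ev n) : Cl n :=
  ∑ i, pd n i (pd n i f) x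

/-- `h` is harmonic on `U`: it is `C²` with `Δh = 0` there. -/
def HarmonicOn (n : ℕ) (h : Ev n → Cl n) (U : Set (Ev n)) : Prop :=
  ContDiffOn ℝ 2 h U ∧ ∀ x ∈ U, Lap n h x = 0

/-! ### Auxiliary algebra -/

section AlgebraAux

open Finset in
/-- Product of generators over a finset, in increasing order. -/
def eB (n : ℕ) (s : Finset (Fin n)) : Cl n := ((s.sort (·≤·)).map (eCl n)).prod

lemma qn_apply (n : ℕ) (x : Ev n) : Qn n x = -(inner ℝ x x : ℝ) := by
  simp [Qn, LinearMap.BilinMap.toQuadraticMap_apply, innerₗ_apply_apply]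

lemma polar_qn (n : ℕ) (x y : Ev n) :
    QuadraticMap.polar (Qn n) x y = -(2 * (inner ℝ x y : ℝ)) := by
  have : QuadraticMap.polar (⇑(Qn n)) x y
      = Qn n (x + y) - Qn n x - Qn n y := rfl
  rw [this, qn_apply, qn_apply, qn_apply]
  rw [real_inner_add_add_self]
  ring

lemma qn_single (n : ℕ) (i : Fin n) : Qn n (EuclideanSpace.single i (1:ℝ)) = -1 := by
  rw [qn_apply]
  rw [real_inner_self_eq_norm_sq]
  simp [EuclideanSpace.norm_single]

lemma eCl_mul_self (n : ℕ) (i : Fin n) :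
    eCl n i * eCl n i = algebraMap ℝ (Cl n) (-1) := by
  rw [eCl, toCl, CliffordAlgebra.ι_sq_scalar, qn_single]

lemma eCl_mul_toCl_add_swap (n : ℕ) (i : Fin n) (x : Ev n) :
    eCl n i * toCl n x + toCl n x * eCl n i
      = algebraMap ℝ (Cl n) (-(2 * x i)) := by
  rw [eCl, toCl, toCl, CliffordAlgebra.ι_mul_ι_add_swap, polar_qn]
  congr 1
  rw [EuclideanSpace.inner_single_left]
  simp

lemma eCl_mul_eCl_add_swap (n : ℕ) (i j : Fin n) :
    eCl n i * eCl n j + eCl n j * eCl n i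
      = algebraMap ℝ (Cl n) (if i = j then (-2:ℝ) else 0) := by
  have := eCl_mul_toCl_add_swap n i (EuclideanSpace.single j (1:ℝ))
  rw [show toCl n (EuclideanSpace.single j (1:ℝ)) = eCl n j from rfl] at this
  rw [this]
  congr 1
  rw [EuclideanSpace.single_apply]
  split <;> simp_all

lemma eCl_mul_eCl_of_ne (n : ℕ) {i j : Fin n} (hij : i ≠ j) :
    eCl n i * eCl n j = -(eCl n j * eCl n i) := by
  have := eCl_mul_eCl_add_swap n i j
  rw [if_neg hij, map_zero] at this
  linear_combination (norm := noncomm_ring) this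

lemma sort_insert_of_lt {n : ℕ} {s : Finset (Fin n)} {j : Fin n} (h : ∀ a ∈ s, j < a) :
    (insert j s).sort (·≤·) = j :: s.sort (·≤·) := by
  have hj : j ∉ s := fun hs => lt_irrefl j (h j hs)
  refine (fun hp hs => List.Perm.eq_of_pairwise' (Finset.pairwise_sort _ _) hs hp) ?_ ?_
  · exact (Finset.sort_perm_toList _ _).trans
      ((Finset.toList_insert hj).trans ((s.sort_perm_toList _).symm.cons j))
  · exact List.pairwise_cons.2 ⟨fun b hb => (h b ((Finset.mem_sort _).mp hb)).le,
      Finset.pairwise_sort _ _⟩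

lemma eCl_mul_eB_of_lt {n : ℕ} {s : Finset (Fin n)} {j : Fin n} (h : ∀ a ∈ s, j < a) :
    eCl n j * eB n s = eB n (insert j s) := by
  rw [eB, eB, sort_insert_of_lt h, List.map_cons, List.prod_cons]

lemma eB_toFinset {n : ℕ} {l : List (Fin n)} (hl : l.Pairwise (·<·)) :
    (l.map (eCl n)).prod = eB n l.toFinset := by
  rw [eB, (List.toFinset_sort _ hl.nodup).2 (hl.imp le_of_lt)]

end AlgebraAux
section FiniteAux

variable {n : ℕ}

/-- Notation for list products of generators. -/
def eP (n : ℕ) (l : List (Fin n)) : Cl n := (l.map (eCl n)).prod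

lemma algebraMap_mul_eq_smul (r : ℝ) (x : Cl n) : algebraMap ℝ (Cl n) r * x = r • x := by
  rw [Algebra.smul_def]

lemma key_lemma : ∀ (l : List (Fin n)), l.Pairwise (·<·) → ∀ i : Fin n,
    eCl n i * eP n l ∈ Submodule.span ℝ
      (eB n '' {s : Finset (Fin n) | ∀ a ∈ s, a = i ∨ a ∈ l}) := by
  intro l
  induction l with
  | nil =>
    intro _ i
    refine Submodule.subset_span ⟨{i}, ?_, ?_⟩
    · intro a ha; simp at ha; simp [ha]
    · simp [eB, eP, Finset.sort_singleton]
  | cons j l' IH =>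
    intro hsort i
    have hl' : l'.Pairwise (·<·) := hsort.of_cons
    have hj : ∀ a ∈ l', j < a := fun a ha => (List.pairwise_cons.1 hsort).1 a ha
    rcases lt_trichotomy i j with hij | rfl | hij
    · -- i < j : the list i :: j :: l' is sorted
      have hs : (i :: j :: l').Pairwise (·<·) :=
        List.pairwise_cons.2 ⟨by
          intro b hb
          rcases List.mem_cons.1 hb with rfl | hb
          · exact hij
          · exact hij.trans (hj b hb), hsort⟩
      have : eCl n i * eP n (j :: l') = eP n (i :: j :: l') := by
        simp [eP, List.prod_cons]
      rw [this, eP, eB_toFinset hs]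
      refine Submodule.subset_span ⟨_, ?_, rfl⟩
      intro a ha
      simp only [List.toFinset_cons, Finset.mem_insert, List.mem_toFinset] at ha
      rcases ha with rfl | rfl | ha <;> simp_all
    · -- i = j : cancellation
      have : eCl n i * eP n (i :: l') = (-1 : ℝ) • eP n l' := by
        rw [eP, List.map_cons, List.prod_cons, ← mul_assoc, eCl_mul_self,
          algebraMap_mul_eq_smul]
        rfl
      rw [this]
      refine Submodule.smul_mem _ _ (Submodule.subset_span ⟨l'.toFinset, ?_, ?_⟩)
      · intro a ha
        right; exact List.mem_cons_of_mem _ (List.mem_toFinset.1 ha)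
      · exact (eB_toFinset hl').symm
    · -- j < i : swap
      have hswap : eCl n i * eP n (j :: l')
          = -(eCl n j * (eCl n i * eP n l')) := by
        rw [eP, List.map_cons, List.prod_cons, ← mul_assoc,
          eCl_mul_eCl_of_ne n (fun hh : i = j => absurd hh (ne_of_gt hij)),
          ← mul_assoc]
        simp [mul_assoc, eP]
      rw [hswap]
      refine neg_mem ?_
      have hmem := IH hl' i
      -- multiply the span membership by eCl n j on the left
      have hmap : eCl n j * (eCl n i * eP n l') ∈ Submodule.map
          (LinearMap.mulLeft ℝ (eCl n j))
          (Submodule.span ℝ (eB n '' {s : Finset (Fin n) | ∀ a ∈ s, a = i ∨ a ∈ l'})) :=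
        ⟨_, hmem, rfl⟩
      rw [Submodule.map_span] at hmap
      refine Submodule.span_le.2 ?_ hmap
      rintro _ ⟨_, ⟨s, hs, rfl⟩, rfl⟩
      have hjs : ∀ a ∈ s, j < a := by
        intro a ha
        rcases hs a ha with rfl | ha'
        · exact hij
        · exact hj a ha'
      have : LinearMap.mulLeft ℝ (eCl n j) (eB n s) = eB n (insert j s) := by
        simp only [LinearMap.mulLeft_apply]
        exact eCl_mul_eB_of_lt hjs
      rw [this]
      refine Submodule.subset_span ⟨insert j s, ?_, rfl⟩
      intro a ha
      rcases Finset.mem_insert.1 ha with rfl | ha'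
      · right; exact List.mem_cons_self
      · rcases hs a ha' with rfl | h'
        · left; rfl
        · right; exact List.mem_cons_of_mem _ h'

lemma eCl_mul_mem_span (i : Fin n) {z : Cl n}
    (hz : z ∈ Submodule.span ℝ (Set.range (eB n))) :
    eCl n i * z ∈ Submodule.span ℝ (Set.range (eB n)) := by
  have hmap : eCl n i * z ∈ Submodule.map (LinearMap.mulLeft ℝ (eCl n i))
      (Submodule.span ℝ (Set.range (eB n))) := ⟨_, hz, rfl⟩
  rw [Submodule.map_span] at hmap
  refine Submodule.span_le.2 ?_ hmap
  rintro _ ⟨_, ⟨s, rfl⟩, rfl⟩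
  have h1 : LinearMap.mulLeft ℝ (eCl n i) (eB n s) = eCl n i * eP n (s.sort (·≤·)) := by
    simp [eP, eB]
  rw [h1]
  have := key_lemma (s.sort (·≤·)) (Finset.sortedLT_sort s).pairwise i
  refine Submodule.span_le.2 ?_ this
  rintro _ ⟨t, _, rfl⟩
  exact Submodule.subset_span ⟨t, rfl⟩

lemma eP_mul_mem_span (l : List (Fin n)) {z : Cl n}
    (hz : z ∈ Submodule.span ℝ (Set.range (eB n))) :
    eP n l * z ∈ Submodule.span ℝ (Set.range (eB n)) := by
  induction l with
  | nil => simpa [eP] using hz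
  | cons i l' IH =>
    have : eP n (i :: l') * z = eCl n i * (eP n l' * z) := by
      simp [eP, List.prod_cons, mul_assoc]
    rw [this]
    exact eCl_mul_mem_span i IH

lemma euclid_decomp (n : ℕ) (v : Ev n) :
    v = ∑ i, v i • EuclideanSpace.single i (1:ℝ) := by
  ext j
  have : (∑ i, v i • EuclideanSpace.single i (1:ℝ)) j
      = ∑ i, (v i • EuclideanSpace.single i (1:ℝ)) j := by
    induction (Finset.univ : Finset (Fin n)) using Finset.cons_induction with
    | empty => rfl
    | cons a s ha IH => rw [Finset.sum_cons, Finset.sum_cons, ← IH]; rfl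
  rw [this]
  simp [EuclideanSpace.single_apply, Finset.sum_ite_eq', mul_comm]

lemma span_eB_eq_top : Submodule.span ℝ (Set.range (eB n)) = ⊤ := by
  rw [eq_top_iff]
  rintro x -
  induction x using CliffordAlgebra.induction with
  | algebraMap r =>
    have : algebraMap ℝ (Cl n) r = r • eB n ∅ := by
      simp [eB, Finset.sort_empty, Algebra.algebraMap_eq_smul_one]
    rw [this]
    exact Submodule.smul_mem _ _ (Submodule.subset_span ⟨∅, rfl⟩)
  | ι v =>
    have hv : CliffordAlgebra.ι (Qn n) v = ∑ i, v i • eCl n i := by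
      conv_lhs => rw [euclid_decomp n v]
      rw [map_sum]
      simp [eCl, toCl]
    rw [hv]
    refine Submodule.sum_mem _ fun i _ => Submodule.smul_mem _ _ ?_
    refine Submodule.subset_span ⟨{i}, ?_⟩
    simp [eB, Finset.sort_singleton, eP]
  | mul a b ha hb =>
    induction ha using Submodule.span_induction with
    | mem x hx =>
      rcases hx with ⟨s, rfl⟩
      have : eB n s * b = eP n (s.sort (·≤·)) * b := by simp [eP, eB]
      rw [this]
      exact eP_mul_mem_span _ hb
    | zero => simpa using Submodule.zero_mem _
    | add x y _ _ hx hy => rw [add_mul]; exact add_mem hx hy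
    | smul r x _ hx => rw [smul_mul_assoc]; exact Submodule.smul_mem _ _ hx
  | add a b ha hb => exact add_mem ha hb

instance (n : ℕ) : Module.Finite ℝ (Cl n) :=
  ⟨Submodule.fg_def.mpr ⟨Set.range (eB n), Set.finite_range _, span_eB_eq_top⟩⟩

instance (n : ℕ) : CompleteSpace (Cl n) := FiniteDimensional.complete ℝ (Cl n)

end FiniteAux
section CalcAux

/-- Vector embedding as a continuous linear map. -/
def toClL (n : ℕ) : Ev n →L[ℝ] Cl n :=
  LinearMap.toContinuousLinearMap (CliffordAlgebra.ι (Qn n))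

@[simp] lemma toClL_apply (n : ℕ) (x : Ev n) : toClL n x = toCl n x := rfl

/-- Multiplication as a continuous bilinear map. -/
def mulL (n : ℕ) : Cl n →L[ℝ] Cl n →L[ℝ] Cl n :=
  LinearMap.toContinuousLinearMap
    (((LinearMap.toContinuousLinearMap :
        (Cl n →ₗ[ℝ] Cl n) ≃ₗ[ℝ] (Cl n →L[ℝ] Cl n)) :
          (Cl n →ₗ[ℝ] Cl n) →ₗ[ℝ] (Cl n →L[ℝ] Cl n)).comp
      (LinearMap.mul ℝ (Cl n)))

@[simp] lemma mulL_apply (n : ℕ) (a b : Cl n) : mulL n a b = a * b := rfl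

lemma pd_of_hasFDerivAt {n : ℕ} {f : Ev n → Cl n} {f' : Ev n →L[ℝ] Cl n} {x : Ev n}
    (hf : HasFDerivAt f f' x) (i : Fin n) :
    pd n i f x = f' (EuclideanSpace.single i 1) := by
  rw [pd, hf.fderiv]

lemma contDiffOn_pd {n : ℕ} {U : Set (Ev n)} (hU : IsOpen U) {f : Ev n → Cl n}
    (hf : ContDiffOn ℝ 2 f U) (i : Fin n) : ContDiffOn ℝ 1 (pd n i f) U := by
  have hfd : ContDiffOn ℝ 1 (fderiv ℝ f) U := hf.fderiv_of_isOpen hU (by norm_num)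
  exact hfd.clm_apply contDiffOn_const

lemma contDiffOn_dirac {n : ℕ} {U : Set (Ev n)} (hU : IsOpen U) {f : Ev n → Cl n}
    (hf : ContDiffOn ℝ 2 f U) : ContDiffOn ℝ 1 (Dirac n f) U := by
  have : Dirac n f = fun x => ∑ i, (mulL n (eCl n i)) (pd n i f x) := by
    funext x; simp [Dirac]
  rw [this]
  exact ContDiffOn.sum fun i _ =>
    (mulL n (eCl n i)).contDiff.comp_contDiffOn (contDiffOn_pd hU hf i)

lemma dirac_dirac_eq_zero {n : ℕ} {U : Set (Ev n)} (hU : IsOpen U) {f : Ev n → Cl n}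
    (hf : ContDiffOn ℝ 2 f U) {x : Ev n} (hx : x ∈ U) (hlap : Lap n f x = 0) :
    Dirac n (Dirac n f) x = 0 := by
  classical
  have hC2 : ContDiffAt ℝ 2 f x := hf.contDiffAt (hU.mem_nhds hx)
  have hsymm := hC2.isSymmSndFDerivAt (by rw [minSmoothness_of_isRCLikeNormedField])
  set A : Fin n → Fin n → Cl n :=
    fun i j => fderiv ℝ (fderiv ℝ f) x (EuclideanSpace.single i 1)
      (EuclideanSpace.single j 1) with hA
  have hdf : DifferentiableAt ℝ (fderiv ℝ f) x :=
    (hC2.fderiv_right le_rfl).differentiableAt one_ne_zero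
  have hasDj : ∀ j : Fin n, HasFDerivAt (pd n j f)
      ((ContinuousLinearMap.apply ℝ (Cl n) (EuclideanSpace.single j 1)).comp
        (fderiv ℝ (fderiv ℝ f) x)) x := by
    intro j
    have := ((ContinuousLinearMap.apply ℝ (Cl n)
        (EuclideanSpace.single j 1)).hasFDerivAt (x := fderiv ℝ f x)).comp x hdf.hasFDerivAt
    exact this
  have hpdpd : ∀ i j, pd n i (pd n j f) x = A i j := fun i j => by
    rw [pd_of_hasFDerivAt (hasDj j) i]; rfl
  have hAsymm : ∀ i j, A i j = A j i := fun i j => hsymm _ _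
  have hDdirac : HasFDerivAt (Dirac n f)
      (∑ j, (mulL n (eCl n j)).comp
        ((ContinuousLinearMap.apply ℝ (Cl n) (EuclideanSpace.single j 1)).comp
          (fderiv ℝ (fderiv ℝ f) x))) x := by
    have : Dirac n f = fun y => ∑ j, (mulL n (eCl n j)) (pd n j f y) := by
      funext y; simp [Dirac]
    rw [this]
    exact HasFDerivAt.fun_sum fun j _ => (mulL n (eCl n j)).hasFDerivAt.comp x (hasDj j)
  have hpdDirac : ∀ i, pd n i (Dirac n f) x = ∑ j, eCl n j * A i j := fun i => by
    rw [pd_of_hasFDerivAt hDdirac i, ContinuousLinearMap.sum_apply]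
    rfl
  have hS : Dirac n (Dirac n f) x = ∑ i, ∑ j, (eCl n i * eCl n j) * A i j := by
    rw [Dirac]
    refine Finset.sum_congr rfl fun i _ => ?_
    rw [hpdDirac i, Finset.mul_sum]
    exact Finset.sum_congr rfl fun j _ => by rw [mul_assoc]
  set S := ∑ i, ∑ j, (eCl n i * eCl n j) * A i j with hSdef
  have hswap : S = ∑ i, ∑ j, (eCl n j * eCl n i) * A i j := by
    rw [hSdef, Finset.sum_comm]
    exact Finset.sum_congr rfl fun i _ => Finset.sum_congr rfl fun j _ => by
      rw [hAsymm i j]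
  have htwo : S + S = ∑ i, ∑ j,
      (algebraMap ℝ (Cl n) (if i = j then (-2:ℝ) else 0)) * A i j := by
    have step : S + S = (∑ i, ∑ j, (eCl n i * eCl n j) * A i j)
        + ∑ i, ∑ j, (eCl n j * eCl n i) * A i j := by rw [← hSdef, ← hswap]
    rw [step, ← Finset.sum_add_distrib]
    refine Finset.sum_congr rfl fun i _ => ?_
    rw [← Finset.sum_add_distrib]
    refine Finset.sum_congr rfl fun j _ => ?_
    rw [← add_mul, eCl_mul_eCl_add_swap]
  have htwo' : S + S = (-2:ℝ) • Lap n f x := by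
    rw [htwo]
    have : ∀ i : Fin n, ∑ j, (algebraMap ℝ (Cl n) (if i = j then (-2:ℝ) else 0)) * A i j
        = (-2:ℝ) • A i i := by
      intro i
      rw [Finset.sum_eq_single i]
      · rw [if_pos rfl, algebraMap_mul_eq_smul]
      · intro j _ hj; rw [if_neg (fun hh => hj hh.symm), map_zero, zero_mul]
      · intro hi; exact absurd (Finset.mem_univ i) hi
    rw [Finset.sum_congr rfl fun i _ => this i, ← Finset.smul_sum, Lap]
    congr 1
    exact Finset.sum_congr rfl fun i _ => (hpdpd i i).symm
  rw [hlap, smul_zero] at htwo'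
  have h2 : (2:ℝ) • S = 0 := by rw [two_smul]; exact htwo'
  have := smul_eq_zero.mp h2
  rcases this with h | h
  · norm_num at h
  · rw [hS]; exact h

end CalcAux
set_option synthInstance.maxHeartbeats 1000000
set_option maxHeartbeats 1600000

section AnalysisAux

open Metric intervalIntegral

/-- The Almansi primitive `f₁(x) = -∫₀¹ tⁿ⁻¹ g(t²x) dt`. -/
def f1 (n : ℕ) (g : Ev n → Cl n) : Ev n → Cl n :=
  fun x => -∫ t in (0:ℝ)..1, (t^(n-1) : ℝ) • g ((t^2 : ℝ) • x)

/-- The derivative of `f₁`. -/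
def Phi (n : ℕ) (g : Ev n → Cl n) : Ev n → (Ev n →L[ℝ] Cl n) :=
  fun x => -∫ t in (0:ℝ)..1, (t^(n+1) : ℝ) • fderiv ℝ g ((t^2 : ℝ) • x)

variable {n : ℕ} {U : Set (Ev n)} {g : Ev n → Cl n} {R : ℝ}

lemma sq_smul_mem {x : Ev n} (hx : ‖x‖ ≤ R) {t : ℝ} (ht : |t| ≤ 1) :
    ((t^2 : ℝ) • x) ∈ closedBall (0 : Ev n) R := by
  rw [mem_closedBall_zero_iff, norm_smul]
  have h1 : ‖(t^2:ℝ)‖ ≤ 1 := by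
    rw [Real.norm_eq_abs, abs_pow]
    calc |t|^2 ≤ 1^2 := pow_le_pow_left₀ (abs_nonneg t) ht 2
    _ = 1 := one_pow 2
  calc ‖(t^2:ℝ)‖ * ‖x‖ ≤ 1 * ‖x‖ := by
        exact mul_le_mul_of_nonneg_right h1 (norm_nonneg x)
  _ = ‖x‖ := one_mul _
  _ ≤ R := hx

lemma abs_le_one_of_Icc {t : ℝ} (ht : t ∈ Set.Icc (0:ℝ) 1) : |t| ≤ 1 :=
  abs_le.2 ⟨le_trans (by norm_num) ht.1, ht.2⟩

variable (hU : IsOpen U) (hg : ContDiffOn ℝ 1 g U)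
  (hball : closedBall (0 : Ev n) R ⊆ U)

section

include hU hg hball

lemma cont_g_comp {x : Ev n} (hx : ‖x‖ ≤ R) (m : ℕ) :
    ContinuousOn (fun t : ℝ => (t^m : ℝ) • g ((t^2 : ℝ) • x)) (Set.Icc (0:ℝ) 1) := by
  refine ContinuousOn.smul ((continuous_pow m).continuousOn) ?_
  refine (hg.continuousOn.comp ((continuous_pow 2).smul continuous_const).continuousOn ?_)
  intro t ht
  exact hball (sq_smul_mem hx (abs_le_one_of_Icc ht))

lemma cont_fd_comp {x : Ev n} (hx : ‖x‖ ≤ R) (m : ℕ) :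
    ContinuousOn (fun t : ℝ => (t^m : ℝ) • fderiv ℝ g ((t^2 : ℝ) • x))
      (Set.Icc (0:ℝ) 1) := by
  refine ContinuousOn.smul ((continuous_pow m).continuousOn) ?_
  refine ((hg.continuousOn_fderiv_of_isOpen hU le_rfl).comp
    ((continuous_pow 2).smul continuous_const).continuousOn ?_)
  intro t ht
  exact hball (sq_smul_mem hx (abs_le_one_of_Icc ht))

lemma int_g_comp {x : Ev n} (hx : ‖x‖ ≤ R) (m : ℕ) :
    IntervalIntegrable (fun t : ℝ => (t^m : ℝ) • g ((t^2 : ℝ) • x)) volume 0 1 := by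
  apply ContinuousOn.intervalIntegrable
  rw [Set.uIcc_of_le (zero_le_one)]
  exact cont_g_comp hU hg hball hx m

lemma int_fd_comp {x : Ev n} (hx : ‖x‖ ≤ R) (m : ℕ) :
    IntervalIntegrable (fun t : ℝ => (t^m : ℝ) • fderiv ℝ g ((t^2 : ℝ) • x)) volume 0 1 := by
  apply ContinuousOn.intervalIntegrable
  rw [Set.uIcc_of_le (zero_le_one)]
  exact cont_fd_comp hU hg hball hx m

omit hball in
lemma hasFDerivAt_g {y : Ev n} (hy : y ∈ U) : HasFDerivAt g (fderiv ℝ g y) y :=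
  (((hg.contDiffAt (hU.mem_nhds hy)).differentiableAt one_ne_zero)).hasFDerivAt

lemma f1_hasFDerivAt (hn : 1 ≤ n) {x₀ : Ev n} (hx₀ : x₀ ∈ ball (0 : Ev n) R) :
    HasFDerivAt (f1 n g) (Phi n g x₀) x₀ := by
  obtain ⟨C, hC⟩ := (isCompact_closedBall (0:Ev n) R).exists_bound_of_continuousOn
    ((hg.continuousOn_fderiv_of_isOpen hU le_rfl).mono hball)
  rw [mem_ball_zero_iff] at hx₀
  set ε := R - ‖x₀‖ with hε
  have εpos : 0 < ε := by simp [hε]; linarith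
  have hsub : ∀ x ∈ ball x₀ ε, ‖x‖ ≤ R := by
    intro x hx
    rw [mem_ball, dist_eq_norm] at hx
    have h1 : ‖x‖ ≤ ‖x₀‖ + ‖x - x₀‖ := by
      simpa using norm_add_le x₀ (x - x₀)
    have h2 : ε = R - ‖x₀‖ := hε
    linarith
  have hIoc : (Set.uIoc (0:ℝ) 1) = Set.Ioc (0:ℝ) 1 := Set.uIoc_of_le zero_le_one
  have key := intervalIntegral.hasFDerivAt_integral_of_dominated_of_fderiv_le
    (F := fun x t => (t^(n-1) : ℝ) • g ((t^2 : ℝ) • x))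
    (F' := fun x t => (t^(n+1) : ℝ) • fderiv ℝ g ((t^2 : ℝ) • x))
    (bound := fun _ => C) (μ := volume) (a := 0) (b := 1) (x₀ := x₀) (ball_mem_nhds x₀ εpos)
    ?_ ?_ ?_ ?_ ?_ ?_
  · exact key.neg
  · filter_upwards [ball_mem_nhds x₀ εpos] with x hx
    rw [hIoc]
    exact ((cont_g_comp hU hg hball (hsub x hx) (n-1)).mono Set.Ioc_subset_Icc_self
      ).aestronglyMeasurable measurableSet_Ioc
  · exact int_g_comp hU hg hball hx₀.le (n-1)
  · rw [hIoc]
    exact ((cont_fd_comp hU hg hball hx₀.le (n+1)).mono Set.Ioc_subset_Icc_self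
      ).aestronglyMeasurable measurableSet_Ioc
  · refine MeasureTheory.ae_of_all _ fun t ht x hx => ?_
    rw [hIoc] at ht
    have ht1 : |t| ≤ 1 := abs_le_one_of_Icc ⟨ht.1.le, ht.2⟩
    show ‖(t^(n+1) : ℝ) • fderiv ℝ g ((t^2:ℝ) • x)‖ ≤ C
    have h1 : ‖(t^(n+1):ℝ)‖ ≤ 1 := by
      rw [Real.norm_eq_abs, abs_pow]
      calc |t|^(n+1) ≤ 1^(n+1) := pow_le_pow_left₀ (abs_nonneg t) ht1 _
      _ = 1 := one_pow _
    have h2 : ‖fderiv ℝ g ((t^2:ℝ) • x)‖ ≤ C :=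
      hC _ (sq_smul_mem (hsub x hx) ht1)
    calc ‖(t^(n+1) : ℝ) • fderiv ℝ g ((t^2:ℝ) • x)‖
        ≤ ‖(t^(n+1):ℝ)‖ * ‖fderiv ℝ g ((t^2:ℝ) • x)‖ := by
          exact norm_smul_le (t^(n+1) : ℝ) (fderiv ℝ g ((t^2:ℝ) • x))
    _ ≤ 1 * ‖fderiv ℝ g ((t^2:ℝ) • x)‖ :=
          mul_le_mul_of_nonneg_right h1 (norm_nonneg _)
    _ = ‖fderiv ℝ g ((t^2:ℝ) • x)‖ := one_mul _
    _ ≤ C := h2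
  · exact intervalIntegrable_const
  · refine MeasureTheory.ae_of_all _ fun t ht x hx => ?_
    rw [hIoc] at ht
    have ht1 : |t| ≤ 1 := abs_le_one_of_Icc ⟨ht.1.le, ht.2⟩
    have h1 : HasFDerivAt (fun y : Ev n => (t^2:ℝ) • y)
        ((t^2:ℝ) • ContinuousLinearMap.id ℝ (Ev n)) x := (hasFDerivAt_id x).const_smul (t^2:ℝ)
    have h2 : HasFDerivAt (fun y : Ev n => g ((t^2:ℝ) • y))
        ((fderiv ℝ g ((t^2:ℝ) • x)).comp ((t^2:ℝ) • ContinuousLinearMap.id ℝ (Ev n))) x :=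
      (hasFDerivAt_g hU hg (hball (sq_smul_mem (hsub x hx) ht1))).comp x h1
    have h3 := h2.const_smul (t^(n-1) : ℝ)
    have heq : (t^(n-1) : ℝ) • ((fderiv ℝ g ((t^2:ℝ) • x)).comp
        ((t^2:ℝ) • ContinuousLinearMap.id ℝ (Ev n)))
        = (t^(n+1) : ℝ) • fderiv ℝ g ((t^2:ℝ) • x) := by
      ext v
      simp only [ContinuousLinearMap.smul_apply, ContinuousLinearMap.coe_comp',
        Function.comp_apply, ContinuousLinearMap.coe_smul',
        ContinuousLinearMap.coe_id', Pi.smul_apply, id_eq,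
        ContinuousLinearMap.map_smul]
      rw [smul_smul, ← pow_add]
      congr 2
      omega
    rw [heq] at h3
    exact h3

lemma phi_contOn (hR : 0 < R) : ContinuousOn (Phi n g) (ball (0:Ev n) R) := by
  obtain ⟨C, hC⟩ := (isCompact_closedBall (0:Ev n) R).exists_bound_of_continuousOn
    ((hg.continuousOn_fderiv_of_isOpen hU le_rfl).mono hball)
  have hrw : Phi n g = fun x =>
      -(∫ t in Set.Ioc (0:ℝ) 1, (t^(n+1) : ℝ) • fderiv ℝ g ((t^2 : ℝ) • x) ∂volume) := by
    funext x
    rw [Phi, intervalIntegral.integral_of_le zero_le_one]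
  rw [hrw]
  refine ContinuousOn.neg ?_
  refine MeasureTheory.continuousOn_of_dominated ?_ ?_ ?_ ?_ (bound := fun _ => C)
  · intro x hx
    rw [mem_ball_zero_iff] at hx
    exact ((cont_fd_comp hU hg hball hx.le (n+1)).mono Set.Ioc_subset_Icc_self
      ).aestronglyMeasurable measurableSet_Ioc
  · intro x hx
    rw [mem_ball_zero_iff] at hx
    filter_upwards [MeasureTheory.ae_restrict_mem measurableSet_Ioc] with t ht
    have ht1 : |t| ≤ 1 := abs_le_one_of_Icc ⟨ht.1.le, ht.2⟩
    show ‖(t^(n+1) : ℝ) • fderiv ℝ g ((t^2:ℝ) • x)‖ ≤ C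
    have h1 : ‖(t^(n+1):ℝ)‖ ≤ 1 := by
      rw [Real.norm_eq_abs, abs_pow]
      calc |t|^(n+1) ≤ 1^(n+1) := pow_le_pow_left₀ (abs_nonneg t) ht1 _
      _ = 1 := one_pow _
    have h2 : ‖fderiv ℝ g ((t^2:ℝ) • x)‖ ≤ C := hC _ (sq_smul_mem hx.le ht1)
    calc ‖(t^(n+1) : ℝ) • fderiv ℝ g ((t^2:ℝ) • x)‖
        ≤ ‖(t^(n+1):ℝ)‖ * ‖fderiv ℝ g ((t^2:ℝ) • x)‖ := by
          exact norm_smul_le (t^(n+1) : ℝ) (fderiv ℝ g ((t^2:ℝ) • x))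
    _ ≤ 1 * ‖fderiv ℝ g ((t^2:ℝ) • x)‖ := mul_le_mul_of_nonneg_right h1 (norm_nonneg _)
    _ = ‖fderiv ℝ g ((t^2:ℝ) • x)‖ := one_mul _
    _ ≤ C := h2
  · exact (MeasureTheory.integrableOn_const_iff).mpr (Or.inr measure_Ioc_lt_top)
  · filter_upwards [MeasureTheory.ae_restrict_mem measurableSet_Ioc] with t ht
    have ht1 : |t| ≤ 1 := abs_le_one_of_Icc ⟨ht.1.le, ht.2⟩
    refine ContinuousOn.const_smul (g := fun x : Ev n => fderiv ℝ g ((t^2:ℝ) • x)) ?_ (t^(n+1):ℝ)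
    refine (hg.continuousOn_fderiv_of_isOpen hU le_rfl).comp
      (continuous_const_smul _).continuousOn ?_
    intro x hx
    rw [mem_ball_zero_iff] at hx
    exact hball (sq_smul_mem hx.le ht1)

lemma f1_contDiffOn (hn : 1 ≤ n) (hR : 0 < R) :
    ContDiffOn ℝ 1 (f1 n g) (ball (0:Ev n) R) := by
  have hiff := contDiffOn_succ_iff_fderiv_of_isOpen (𝕜 := ℝ) (f := f1 n g)
    (n := (0 : WithTop ℕ∞)) (isOpen_ball (x := (0:Ev n)) (ε := R))
  rw [zero_add] at hiff
  rw [hiff]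
  refine ⟨fun x hx => ((f1_hasFDerivAt hU hg hball hn hx).differentiableAt
    ).differentiableWithinAt, by simp, ?_⟩
  rw [contDiffOn_zero]
  refine (phi_contOn hU hg hball hR).congr ?_
  intro x hx
  exact (f1_hasFDerivAt hU hg hball hn hx).fderiv

lemma ftc_g (hn : 1 ≤ n) {x : Ev n} (hx : ‖x‖ ≤ R) :
    (∫ t in (0:ℝ)..1, (((n:ℝ) * t^(n-1)) • g ((t^2:ℝ) • x)
      + ((2:ℝ) * t^(n+1)) • (fderiv ℝ g ((t^2:ℝ) • x)) x)) = g x := by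
  have hd : ∀ t ∈ Set.uIcc (0:ℝ) 1, HasDerivAt (fun t : ℝ => (t^n : ℝ) • g ((t^2:ℝ) • x))
      (((n:ℝ) * t^(n-1)) • g ((t^2:ℝ) • x)
        + ((2:ℝ) * t^(n+1)) • (fderiv ℝ g ((t^2:ℝ) • x)) x) t := by
    intro t ht
    rw [Set.uIcc_of_le zero_le_one] at ht
    have ht1 : |t| ≤ 1 := abs_le_one_of_Icc ht
    have hu : HasDerivAt (fun t : ℝ => (t^n : ℝ)) ((n:ℝ) * t^(n-1)) t := hasDerivAt_pow n t
    have hc : HasDerivAt (fun t : ℝ => (t^2:ℝ) • x) (((2:ℝ)*t) • x) t := by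
      have := (hasDerivAt_pow 2 t).smul_const x
      simpa using this
    have hv : HasDerivAt (fun t : ℝ => g ((t^2:ℝ) • x))
        ((fderiv ℝ g ((t^2:ℝ) • x)) (((2:ℝ)*t) • x)) t :=
      (hasFDerivAt_g hU hg (hball (sq_smul_mem hx ht1))).comp_hasDerivAt t hc
    have hprod := hu.smul hv
    have heq : (t^n : ℝ) • ((fderiv ℝ g ((t^2:ℝ) • x)) (((2:ℝ)*t) • x))
          + ((n:ℝ) * t^(n-1)) • g ((t^2:ℝ) • x)
        = ((n:ℝ) * t^(n-1)) • g ((t^2:ℝ) • x)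
          + ((2:ℝ) * t^(n+1)) • (fderiv ℝ g ((t^2:ℝ) • x)) x := by
      rw [add_comm]
      congr 1
      rw [ContinuousLinearMap.map_smul, smul_smul]
      congr 1
      rw [pow_succ]
      ring
    rw [heq] at hprod
    exact hprod
  have hint : IntervalIntegrable (fun t : ℝ => ((n:ℝ) * t^(n-1)) • g ((t^2:ℝ) • x)
      + ((2:ℝ) * t^(n+1)) • (fderiv ℝ g ((t^2:ℝ) • x)) x) volume 0 1 := by
    apply ContinuousOn.intervalIntegrable
    rw [Set.uIcc_of_le (zero_le_one)]
    refine ContinuousOn.add ?_ ?_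
    · have := cont_g_comp hU hg hball hx (n-1)
      have h2 := this.const_smul (n:ℝ)
      refine h2.congr ?_
      intro t ht
      simp [smul_smul]
    · have := cont_fd_comp hU hg hball hx (n+1)
      have h2 : ContinuousOn (fun t : ℝ =>
          ((t^(n+1) : ℝ) • fderiv ℝ g ((t^2:ℝ) • x)) x) (Set.Icc (0:ℝ) 1) := by
        exact this.clm_apply continuousOn_const
      have h3 := h2.const_smul (2:ℝ)
      refine h3.congr ?_
      intro t ht
      simp [smul_smul]
  rw [intervalIntegral.integral_eq_sub_of_hasDerivAt hd hint]
  have h1 : ((1:ℝ)^n : ℝ) • g (((1:ℝ)^2 : ℝ) • x) = g x := by norm_num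
  have h0 : ((0:ℝ)^n : ℝ) • g (((0:ℝ)^2 : ℝ) • x) = 0 := by
    rw [zero_pow (by omega : n ≠ 0), zero_smul]
  rw [h1, h0, sub_zero]

end

end AnalysisAux
section AnalysisAux2

open Metric intervalIntegral

lemma dirac_sub {n : ℕ} {A B : Ev n → Cl n} {x : Ev n} (hA : DifferentiableAt ℝ A x)
    (hB : DifferentiableAt ℝ B x) :
    Dirac n (fun y => A y - B y) x = Dirac n A x - Dirac n B x := by
  rw [Dirac, Dirac, Dirac, ← Finset.sum_sub_distrib]
  refine Finset.sum_congr rfl fun i _ => ?_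
  rw [pd, pd, pd, fderiv_fun_sub hA hB]
  simp [mul_sub]

variable {n : ℕ} {U : Set (Ev n)} {g : Ev n → Cl n} {R : ℝ}
variable (hU : IsOpen U) (hg : ContDiffOn ℝ 1 g U)
  (hball : closedBall (0 : Ev n) R ⊆ U)

include hU hg hball

lemma int_fd_apply {x : Ev n} (hx : ‖x‖ ≤ R) (m : ℕ) (v : Ev n) :
    IntervalIntegrable
      (fun t : ℝ => (t^m : ℝ) • (fderiv ℝ g ((t^2:ℝ) • x)) v) volume 0 1 := by
  apply ContinuousOn.intervalIntegrable
  rw [Set.uIcc_of_le zero_le_one]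
  have h1 := (cont_fd_comp hU hg hball hx m).clm_apply (continuousOn_const (c := v))
  refine h1.congr fun t ht => ?_
  simp

lemma int_mul_fd_apply {x : Ev n} (hx : ‖x‖ ≤ R) (m : ℕ) (c : Cl n) (v : Ev n) :
    IntervalIntegrable
      (fun t : ℝ => (t^m:ℝ) • (c * (fderiv ℝ g ((t^2:ℝ) • x)) v)) volume 0 1 := by
  apply ContinuousOn.intervalIntegrable
  rw [Set.uIcc_of_le zero_le_one]
  refine ContinuousOn.smul (continuous_pow m).continuousOn ?_
  have base : ContinuousOn (fun t : ℝ => (fderiv ℝ g ((t^2:ℝ) • x)) v)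
      (Set.Icc (0:ℝ) 1) := by
    have h1 := (cont_fd_comp hU hg hball hx 0).clm_apply (continuousOn_const (c := v))
    refine h1.congr fun t ht => ?_
    simp
  have h2 := (mulL n c).continuous.comp_continuousOn base
  refine h2.congr fun t ht => ?_
  simp

lemma pd_f1 (hn : 1 ≤ n) {x : Ev n} (hx : x ∈ ball (0:Ev n) R) (i : Fin n) :
    pd n i (f1 n g) x
      = -∫ t in (0:ℝ)..1,
          (t^(n+1) : ℝ) • (fderiv ℝ g ((t^2:ℝ) • x)) (EuclideanSpace.single i 1) := by
  rw [pd_of_hasFDerivAt (f1_hasFDerivAt hU hg hball hn hx) i, Phi,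
    ContinuousLinearMap.neg_apply]
  congr 1
  rw [ContinuousLinearMap.intervalIntegral_apply
    (int_fd_comp hU hg hball (mem_ball_zero_iff.1 hx).le (n+1))]
  simp only [ContinuousLinearMap.smul_apply]

lemma phi_apply_self {x : Ev n} (hx : x ∈ ball (0:Ev n) R) :
    Phi n g x x
      = -∫ t in (0:ℝ)..1, (t^(n+1) : ℝ) • (fderiv ℝ g ((t^2:ℝ) • x)) x := by
  rw [Phi, ContinuousLinearMap.neg_apply]
  congr 1
  rw [ContinuousLinearMap.intervalIntegral_apply
    (int_fd_comp hU hg hball (mem_ball_zero_iff.1 hx).le (n+1))]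
  simp only [ContinuousLinearMap.smul_apply]

lemma sum_smul_pd (hn : 1 ≤ n) {x : Ev n} (hx : x ∈ ball (0:Ev n) R) :
    ∑ i, (x i : ℝ) • pd n i (f1 n g) x = Phi n g x x := by
  have hf := f1_hasFDerivAt hU hg hball hn hx
  calc ∑ i, (x i : ℝ) • pd n i (f1 n g) x
      = ∑ i, (x i : ℝ) • Phi n g x (EuclideanSpace.single i 1) :=
        Finset.sum_congr rfl fun i _ => by rw [pd_of_hasFDerivAt hf i]
  _ = ∑ i, Phi n g x ((x i : ℝ) • EuclideanSpace.single i 1) :=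
        Finset.sum_congr rfl fun i _ => by rw [ContinuousLinearMap.map_smul]
  _ = Phi n g x (∑ i, (x i : ℝ) • EuclideanSpace.single i 1) := by rw [map_sum]
  _ = Phi n g x x := by rw [← euclid_decomp]

lemma dirac_f1_eq_zero (hn : 1 ≤ n) (hDg : ∀ y ∈ U, Dirac n g y = 0)
    {x : Ev n} (hx : x ∈ ball (0:Ev n) R) : Dirac n (f1 n g) x = 0 := by
  have hxR : ‖x‖ ≤ R := (mem_ball_zero_iff.1 hx).le
  have hterm : ∀ i : Fin n, eCl n i * pd n i (f1 n g) x
      = -∫ t in (0:ℝ)..1,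
          (t^(n+1):ℝ) •
            (eCl n i * (fderiv ℝ g ((t^2:ℝ) • x)) (EuclideanSpace.single i 1)) := by
    intro i
    rw [pd_f1 hU hg hball hn hx i, mul_neg]
    congr 1
    have hcomm := ContinuousLinearMap.intervalIntegral_comp_comm (mulL n (eCl n i))
      (int_fd_apply hU hg hball hxR (n+1) (EuclideanSpace.single i 1))
    calc eCl n i * ∫ t in (0:ℝ)..1,
          (t^(n+1):ℝ) • (fderiv ℝ g ((t^2:ℝ) • x)) (EuclideanSpace.single i 1)
        = ∫ t in (0:ℝ)..1, mulL n (eCl n i)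
            ((t^(n+1):ℝ) • (fderiv ℝ g ((t^2:ℝ) • x)) (EuclideanSpace.single i 1)) :=
          hcomm.symm
    _ = ∫ t in (0:ℝ)..1, (t^(n+1):ℝ) •
          (eCl n i * (fderiv ℝ g ((t^2:ℝ) • x)) (EuclideanSpace.single i 1)) := by
        refine intervalIntegral.integral_congr fun t ht => ?_
        simp
  rw [Dirac]
  calc ∑ i, eCl n i * pd n i (f1 n g) x
      = -∑ i, ∫ t in (0:ℝ)..1,
          (t^(n+1):ℝ) •
            (eCl n i * (fderiv ℝ g ((t^2:ℝ) • x)) (EuclideanSpace.single i 1)) := by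
        rw [← Finset.sum_neg_distrib]
        exact Finset.sum_congr rfl fun i _ => hterm i
  _ = -∫ t in (0:ℝ)..1, ∑ i,
          (t^(n+1):ℝ) •
            (eCl n i * (fderiv ℝ g ((t^2:ℝ) • x)) (EuclideanSpace.single i 1)) := by
        congr 1
        rw [intervalIntegral.integral_finset_sum
          (fun i _ => int_mul_fd_apply hU hg hball hxR (n+1) (eCl n i) _)]
  _ = 0 := by
        have hzero : ∀ t ∈ Set.uIcc (0:ℝ) 1, ∑ i,
            (t^(n+1):ℝ) •
              (eCl n i * (fderiv ℝ g ((t^2:ℝ) • x)) (EuclideanSpace.single i 1))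
            = (0 : Cl n) := by
          intro t ht
          rw [Set.uIcc_of_le zero_le_one] at ht
          have ht1 : |t| ≤ 1 := abs_le_one_of_Icc ht
          have hmem : ((t^2:ℝ) • x) ∈ U := hball (sq_smul_mem hxR ht1)
          have : ∑ i, (t^(n+1):ℝ) •
              (eCl n i * (fderiv ℝ g ((t^2:ℝ) • x)) (EuclideanSpace.single i 1))
              = (t^(n+1):ℝ) • Dirac n g ((t^2:ℝ) • x) := by
            rw [Dirac, Finset.smul_sum]
            rfl
          rw [this, hDg _ hmem, smul_zero]
        rw [intervalIntegral.integral_congr hzero]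
        simp

lemma dirac_mul_f1 (hn : 1 ≤ n) (hDg : ∀ y ∈ U, Dirac n g y = 0)
    {x : Ev n} (hx : x ∈ ball (0:Ev n) R) :
    Dirac n (fun y => toCl n y * f1 n g y) x = g x := by
  have hxR : ‖x‖ ≤ R := (mem_ball_zero_iff.1 hx).le
  have hf1 := f1_hasFDerivAt hU hg hball hn hx
  have hc : HasFDerivAt (fun y : Ev n => mulL n (toCl n y))
      ((mulL n).comp (toClL n)) x := ((mulL n).comp (toClL n)).hasFDerivAt
  have hprod : HasFDerivAt (fun y => toCl n y * f1 n g y)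
      ((mulL n (toCl n x)).comp (Phi n g x)
        + ((mulL n).comp (toClL n)).flip (f1 n g x)) x := hc.clm_apply hf1
  have hpdx : ∀ i : Fin n, pd n i (fun y => toCl n y * f1 n g y) x
      = toCl n x * pd n i (f1 n g) x + eCl n i * f1 n g x := by
    intro i
    rw [pd_of_hasFDerivAt hprod i]
    rw [ContinuousLinearMap.add_apply, ContinuousLinearMap.comp_apply,
      ContinuousLinearMap.flip_apply, ContinuousLinearMap.comp_apply]
    rw [← pd_of_hasFDerivAt hf1 i]
    simp only [mulL_apply, toClL_apply]
    rfl
  have step1 : Dirac n (fun y => toCl n y * f1 n g y) x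
      = (∑ i, eCl n i * (toCl n x * pd n i (f1 n g) x))
        + ∑ i, eCl n i * (eCl n i * f1 n g x) := by
    rw [Dirac, ← Finset.sum_add_distrib]
    exact Finset.sum_congr rfl fun i _ => by rw [hpdx i, mul_add]
  have step2 : ∑ i, eCl n i * (eCl n i * f1 n g x) = (-(n:ℝ)) • f1 n g x := by
    have : ∀ i : Fin n, eCl n i * (eCl n i * f1 n g x) = (-1:ℝ) • f1 n g x := by
      intro i
      rw [← mul_assoc, eCl_mul_self, algebraMap_mul_eq_smul]
    rw [Finset.sum_congr rfl fun i _ => this i, Finset.sum_const, Finset.card_univ,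
      Fintype.card_fin, ← Nat.cast_smul_eq_nsmul ℝ, smul_smul]
    congr 1
    ring
  have step3 : ∑ i, eCl n i * (toCl n x * pd n i (f1 n g) x)
      = (-2:ℝ) • Phi n g x x - toCl n x * Dirac n (f1 n g) x := by
    have hswap : ∀ i : Fin n, eCl n i * (toCl n x * pd n i (f1 n g) x)
        = (-(2 * x i)) • pd n i (f1 n g) x
          - toCl n x * (eCl n i * pd n i (f1 n g) x) := by
      intro i
      have h := eCl_mul_toCl_add_swap n i x
      calc eCl n i * (toCl n x * pd n i (f1 n g) x)
          = (eCl n i * toCl n x) * pd n i (f1 n g) x := (mul_assoc _ _ _).symm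
      _ = (algebraMap ℝ (Cl n) (-(2 * x i)) - toCl n x * eCl n i)
            * pd n i (f1 n g) x := by rw [eq_sub_of_add_eq h]
      _ = algebraMap ℝ (Cl n) (-(2 * x i)) * pd n i (f1 n g) x
            - toCl n x * (eCl n i * pd n i (f1 n g) x) := by
          rw [sub_mul, mul_assoc]
      _ = (-(2 * x i)) • pd n i (f1 n g) x
            - toCl n x * (eCl n i * pd n i (f1 n g) x) := by
          rw [algebraMap_mul_eq_smul]
    rw [Finset.sum_congr rfl fun i _ => hswap i, Finset.sum_sub_distrib]
    congr 1
    · rw [← sum_smul_pd hU hg hball hn hx, Finset.smul_sum]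
      refine Finset.sum_congr rfl fun i _ => ?_
      rw [smul_smul]
      congr 1
      ring
    · rw [Dirac, Finset.mul_sum]
  rw [step1, step2, step3, dirac_f1_eq_zero hU hg hball hn hDg hx, mul_zero, sub_zero]
  -- now evaluate the two integrals
  have hA : (-(n:ℝ)) • f1 n g x
      = ∫ t in (0:ℝ)..1, ((n:ℝ) * t^(n-1)) • g ((t^2:ℝ) • x) := by
    simp only [f1]
    rw [smul_neg, ← neg_smul, neg_neg]
    rw [← intervalIntegral.integral_smul]
    refine intervalIntegral.integral_congr fun t ht => ?_
    rw [smul_smul]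
  have hB : (-2:ℝ) • Phi n g x x
      = ∫ t in (0:ℝ)..1, ((2:ℝ) * t^(n+1)) • (fderiv ℝ g ((t^2:ℝ) • x)) x := by
    rw [phi_apply_self hU hg hball hx]
    rw [smul_neg, ← neg_smul, neg_neg]
    rw [← intervalIntegral.integral_smul]
    refine intervalIntegral.integral_congr fun t ht => ?_
    rw [smul_smul]
  have hintA : IntervalIntegrable
      (fun t : ℝ => ((n:ℝ) * t^(n-1)) • g ((t^2:ℝ) • x)) volume 0 1 := by
    apply ContinuousOn.intervalIntegrable
    rw [Set.uIcc_of_le zero_le_one]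
    have h2 := (cont_g_comp hU hg hball hxR (n-1)).const_smul (n:ℝ)
    refine h2.congr fun t ht => ?_
    simp [smul_smul]
  have hintB : IntervalIntegrable
      (fun t : ℝ => ((2:ℝ) * t^(n+1)) • (fderiv ℝ g ((t^2:ℝ) • x)) x) volume 0 1 := by
    apply ContinuousOn.intervalIntegrable
    rw [Set.uIcc_of_le zero_le_one]
    have base : ContinuousOn (fun t : ℝ => (fderiv ℝ g ((t^2:ℝ) • x)) x)
        (Set.Icc (0:ℝ) 1) := by
      have h1 := (cont_fd_comp hU hg hball hxR 0).clm_apply (continuousOn_const (c := x))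
      refine h1.congr fun t ht => ?_
      simp
    have h2 := (ContinuousOn.smul ((continuous_pow (n+1)).continuousOn) base).const_smul (2:ℝ)
    refine h2.congr fun t ht => ?_
    simp [smul_smul]
  rw [hB, hA, ← intervalIntegral.integral_add hintB hintA]
  refine Eq.trans (intervalIntegral.integral_congr fun t ht => add_comm _ _) ?_
  exact ftc_g hU hg hball hn hxR

end AnalysisAux2
/-- **Almansi decomposition of harmonic functions**: `h = x f₁(x) + f₂(x)` with
`f₁, f₂` left monogenic on the ball. -/
theorem almansi_decomposition_harmonic (n : ℕ) (hn : 2 ≤ n) (U : Set (Ev n)) (hU : IsOpen U)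
    (h : Ev n → Cl n) (hh : HarmonicOn n h U) (R : ℝ) (hR : 0 < R)
    (hball : Metric.closedBall (0 : Ev n) R ⊆ U) :
    ∃ f₁ f₂ : Ev n → Cl n,
      LeftMonogenicOn n f₁ (Metric.ball 0 R) ∧ LeftMonogenicOn n f₂ (Metric.ball 0 R) ∧
      ∀ x ∈ Metric.ball (0 : Ev n) R, h x = toCl n x * f₁ x + f₂ x := by
  have hh2 : ContDiffOn ℝ 2 h U := hh.1
  have hg : ContDiffOn ℝ 1 (Dirac n h) U := contDiffOn_dirac hU hh2
  have hDg : ∀ y ∈ U, Dirac n (Dirac n h) y = 0 := fun y hy =>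
    dirac_dirac_eq_zero hU hh2 hy (hh.2 y hy)
  have hn1 : (1:ℕ) ≤ n := le_trans one_le_two hn
  have hbsub : Metric.ball (0:Ev n) R ⊆ U :=
    Set.Subset.trans Metric.ball_subset_closedBall hball
  refine ⟨f1 n (Dirac n h), fun y => h y - toCl n y * f1 n (Dirac n h) y, ?_, ?_, ?_⟩
  · exact ⟨f1_contDiffOn hU hg hball hn1 hR,
      fun x hx => dirac_f1_eq_zero hU hg hball hn1 hDg hx⟩
  · constructor
    · have h1 : ContDiffOn ℝ 1 h (Metric.ball (0:Ev n) R) :=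
        (hh2.of_le one_le_two).mono hbsub
      have h2 : ContDiffOn ℝ 1 (fun y => toCl n y * f1 n (Dirac n h) y)
          (Metric.ball (0:Ev n) R) := by
        have hc : ContDiffOn ℝ 1 (fun y : Ev n => mulL n (toCl n y))
            (Metric.ball (0:Ev n) R) :=
          (((mulL n).comp (toClL n)).contDiff.contDiffOn)
        exact hc.clm_apply (f1_contDiffOn hU hg hball hn1 hR)
      exact h1.sub h2
    · intro x hx
      have hdh : DifferentiableAt ℝ h x :=
        (hh2.contDiffAt (hU.mem_nhds (hbsub hx))).differentiableAt two_ne_zero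
      have hf1 := f1_hasFDerivAt hU hg hball hn1 hx
      have hc : HasFDerivAt (fun y : Ev n => mulL n (toCl n y))
          ((mulL n).comp (toClL n)) x := ((mulL n).comp (toClL n)).hasFDerivAt
      have hp : DifferentiableAt ℝ (fun y => toCl n y * f1 n (Dirac n h) y) x :=
        (hc.clm_apply hf1).differentiableAt
      rw [dirac_sub hdh hp, dirac_mul_f1 hU hg hball hn1 hDg hx, sub_self]
  · intro x hx
    rw [add_comm, sub_add_cancel]

end
end

section
/- The Cauchy kernel is annihilated by the spherical Dirac operator: Let n ≥ 2, work in ℝ^{n+1} ⊆ Cl_{n+1} with generators e₁,…,e_{n+1}, and let Λ_n = Σ_{1 ≤ i < k ≤ n+1} e_i e_k ( x_i ∂/∂x_k − x_k ∂/∂x_i ) be the angular (spherical) Dirac operator. Fix y ∈ Sⁿ (the unit sphere of ℝ^{n+1}) and define G_s(x, y) = (x−y)/‖x−y‖ⁿ for x ∈ ℝ^{n+1} \ {y}, a Cl_{n+1}-valued function of x. Then for every x ∈ Sⁿ with x ≠ y, (Λ_n G_s(·, y))(x) = −(n/2) G_s(x, y); equivalently, x (Λ_n + n/2) G_s(x,y)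 = 0 for all such x, where the products are Clifford products. -/
noncomputable section

open MeasureTheory
open scoped BoundedContinuousFunction

/-- The angular (spherical) Dirac operator
`Λ f = Σ_{i<k} e_i e_k (x_i ∂f/∂x_k - x_k ∂f/∂x_i)`. -/
def Lambda (m : ℕ) (f : Ev m → Cl m) (x : Ev m) : Cl m :=
  ∑ p ∈ Finset.univ.filter (fun p : Fin m × Fin m => p.1 < p.2),
    eCl m p.1 * eCl m p.2 * ((x p.1) • pd m p.2 f x - (x p.2) • pd m p.1 f x)

open scoped RealInnerProductSpace

lemma Qn_apply (n : ℕ) (a : Ev n) : Qn n a = -⟪a,a⟫ := by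
  simp [Qn, LinearMap.BilinMap.toQuadraticMap_apply, innerₗ_apply_apply]

lemma Qn_polar (n : ℕ) (a b : Ev n) : QuadraticMap.polar (Qn n) a b = -(2*⟪a,b⟫) := by
  simp only [QuadraticMap.polar, Qn_apply, inner_add_add_self]
  rw [real_inner_comm b a]; ring

lemma toCl_sq (m : ℕ) (v : Ev m) :
    toCl m v * toCl m v = algebraMap ℝ (Cl m) (-(‖v‖^2)) := by
  rw [toCl, CliffordAlgebra.ι_sq_scalar, Qn_apply, real_inner_self_eq_norm_sq]

lemma toCl_anticomm (m : ℕ) (v w : Ev m) :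
    toCl m v * toCl m w = algebraMap ℝ (Cl m) (-(2*⟪v,w⟫)) - toCl m w * toCl m v := by
  have := CliffordAlgebra.ι_mul_ι_add_swap (Q := Qn m) v w
  rw [Qn_polar] at this
  rw [toCl, toCl, ← this]; abel

lemma eCl_sq (m : ℕ) (i : Fin m) : eCl m i * eCl m i = algebraMap ℝ (Cl m) (-1) := by
  rw [eCl, toCl_sq]; norm_num

lemma toCl_eq_sum (m : ℕ) (v : Ev m) : toCl m v = ∑ i, v i • eCl m i := by
  have hv := (EuclideanSpace.basisFun (Fin m) ℝ).sum_repr v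
  simp only [EuclideanSpace.basisFun_repr, EuclideanSpace.basisFun_apply] at hv
  conv_lhs => rw [← hv]
  simp only [toCl, eCl, map_sum, _root_.map_smul]

/-- `toCl` as a continuous linear map. -/
def iotaL (m : ℕ) : Ev m →L[ℝ] Cl m :=
  LinearMap.toContinuousLinearMap (CliffordAlgebra.ι (Qn m))

lemma iotaL_apply (m : ℕ) (v : Ev m) : iotaL m v = toCl m v := rfl

lemma pd_kernel (n : ℕ) (hn : 1 ≤ n) (y x : Ev (n+1)) (hxy : x ≠ y) (i : Fin (n+1)) :
    pd (n+1) i (fun z => (‖z - y‖ ^ n)⁻¹ • toCl (n+1) (z - y)) x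
      = (-(n:ℝ) * (‖x-y‖^(n+2))⁻¹ * ((x - y) i)) • toCl (n+1) (x-y)
        + (‖x-y‖^n)⁻¹ • eCl (n+1) i := by
  have hr : (0:ℝ) < ‖x - y‖ := by
    rw [norm_pos_iff, sub_ne_zero]; exact hxy
  set r : ℝ := ‖x - y‖ with hrdef
  have hsub : HasFDerivAt (fun z : Ev (n+1) => z - y) (ContinuousLinearMap.id ℝ (Ev (n+1))) x :=
    (hasFDerivAt_id x).sub_const y
  have hsq : HasFDerivAt (fun z : Ev (n+1) => ‖z - y‖^2)
      (2 • (innerSL ℝ (x - y)).comp (ContinuousLinearMap.id ℝ (Ev (n+1)))) x :=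
    hsub.norm_sq
  have hrsq : Real.sqrt (r^2) = r := Real.sqrt_sq hr.le
  have hsqrt : HasDerivAt Real.sqrt (1 / (2 * Real.sqrt (r^2))) (r^2) :=
    Real.hasDerivAt_sqrt (by positivity)
  have hpow : HasDerivAt (fun t => Real.sqrt t ^ n)
      ((n : ℝ) * Real.sqrt (r^2) ^ (n-1) * (1 / (2 * Real.sqrt (r^2)))) (r^2) :=
    hsqrt.pow n
  have hne : Real.sqrt (r^2) ^ n ≠ 0 := by rw [hrsq]; positivity
  have hinv : HasDerivAt (fun t => (Real.sqrt t ^ n)⁻¹)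
      (-((n : ℝ) * Real.sqrt (r^2) ^ (n-1) * (1 / (2 * Real.sqrt (r^2)))) / (Real.sqrt (r^2) ^ n)^2) (r^2) :=
    hpow.inv hne
  set d : ℝ := -((n : ℝ) * Real.sqrt (r^2) ^ (n-1) * (1 / (2 * Real.sqrt (r^2)))) / (Real.sqrt (r^2) ^ n)^2 with hd
  have hd2 : 2 * d = -(n:ℝ) * (r^(n+2))⁻¹ := by
    rw [hd, hrsq]
    have h3 : r ^ 3 * r ^ ((n - 1) * 2) = r * r ^ (n * 2) := by
      rw [← pow_add, ← pow_succ']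
      congr 1; omega
    have h4 : r ^ 2 * r ^ (n - 1) * r ^ n = r ^ 3 * r ^ ((n - 1) * 2) := by
      rw [← pow_add, ← pow_add, ← pow_add]
      congr 1; omega
    field_simp
    linear_combination -h3 - h4
  have heq : (fun z : Ev (n+1) => (‖z - y‖ ^ n)⁻¹)
      = (fun t => (Real.sqrt t ^ n)⁻¹) ∘ (fun z : Ev (n+1) => ‖z - y‖^2) := by
    funext z
    simp [Function.comp, Real.sqrt_sq (norm_nonneg (z - y))]
  have hc : HasFDerivAt (fun z : Ev (n+1) => (‖z - y‖ ^ n)⁻¹)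
      (d • (2 • (innerSL ℝ (x - y)).comp (ContinuousLinearMap.id ℝ (Ev (n+1))))) x := by
    have h := hinv.comp_hasFDerivAt x hsq
    rw [← heq] at h
    exact h
  have hv : HasFDerivAt (fun z : Ev (n+1) => toCl (n+1) (z - y)) (iotaL (n+1)) x := by
    have h : HasFDerivAt (fun z : Ev (n+1) => iotaL (n+1) (z - y))
        ((iotaL (n+1)).comp (ContinuousLinearMap.id ℝ (Ev (n+1)))) x :=
      ((iotaL (n+1)).hasFDerivAt).comp x hsub
    simpa [iotaL_apply] using h
  have hf : HasFDerivAt (fun z : Ev (n+1) => (‖z - y‖ ^ n)⁻¹ • toCl (n+1) (z - y))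
      ((‖x - y‖ ^ n)⁻¹ • (iotaL (n+1)) +
        (d • (2 • (innerSL ℝ (x - y)).comp (ContinuousLinearMap.id ℝ (Ev (n+1))))).smulRight (toCl (n+1) (x - y))) x :=
    hc.smul hv
  rw [pd, hf.fderiv]
  have hinner : ⟪x - y, EuclideanSpace.single i (1:ℝ)⟫ = (x - y) i := by
    rw [real_inner_comm]
    simp [EuclideanSpace.inner_single_left]
  simp only [ContinuousLinearMap.add_apply, ContinuousLinearMap.smul_apply,
    ContinuousLinearMap.smulRight_apply, ContinuousLinearMap.coe_smul',
    ContinuousLinearMap.coe_comp', ContinuousLinearMap.coe_id', Pi.smul_apply,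
    Function.comp_apply, id_eq, innerSL_apply_apply, iotaL_apply]
  have hcoef : d • (2 • ((x - y) i)) = -(n:ℝ) * (r^(n+2))⁻¹ * ((x - y) i) := by
    simp only [smul_eq_mul]
    linear_combination ((x - y) i) * hd2
  rw [hinner, hcoef]
  exact add_comm _ _

lemma eCl_anticomm (m : ℕ) {i k : Fin m} (h : i ≠ k) :
    eCl m i * eCl m k = -(eCl m k * eCl m i) := by
  have hinner : ⟪EuclideanSpace.single i (1:ℝ), EuclideanSpace.single k (1:ℝ)⟫ = 0 := by
    simp [EuclideanSpace.inner_single_left, EuclideanSpace.single_apply, h, Ne.symm h]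
  rw [eCl, eCl, toCl_anticomm, hinner]
  simp

lemma lambda_split (m : ℕ) (x : Ev m) (g : Fin m → Cl m) :
    ∑ p ∈ Finset.univ.filter (fun p : Fin m × Fin m => p.1 < p.2),
        eCl m p.1 * eCl m p.2 * ((x p.1) • g p.2 - (x p.2) • g p.1)
    = toCl m x * (∑ k, eCl m k * g k) + ∑ i, (x i) • g i := by
  classical
  set F : Fin m × Fin m → Cl m := fun p => x p.1 • (eCl m p.1 * (eCl m p.2 * g p.2)) with hF
  have hterm : ∀ p ∈ Finset.univ.filter (fun p : Fin m × Fin m => p.1 < p.2),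
      eCl m p.1 * eCl m p.2 * ((x p.1) • g p.2 - (x p.2) • g p.1) = F p + F p.swap := by
    rintro ⟨i, k⟩ hp
    simp only [Finset.mem_filter, Finset.mem_univ, true_and] at hp
    have hik : i ≠ k := ne_of_lt hp
    have ha := eCl_anticomm m hik
    simp only [hF, Prod.swap_prod_mk, Prod.fst, Prod.snd]
    rw [mul_sub, mul_smul_comm, mul_smul_comm, mul_assoc]
    rw [show eCl m i * eCl m k * g i = -(eCl m k * (eCl m i * g i)) by
      rw [ha, neg_mul, mul_assoc]]
    rw [smul_neg, sub_neg_eq_add]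
  rw [Finset.sum_congr rfl hterm, Finset.sum_add_distrib]
  have hswap : (∑ p ∈ Finset.univ.filter (fun p : Fin m × Fin m => p.1 < p.2), F p.swap)
      = ∑ p ∈ Finset.univ.filter (fun p : Fin m × Fin m => p.2 < p.1), F p := by
    refine Finset.sum_equiv (Equiv.prodComm (Fin m) (Fin m)) (fun p => by simp) (fun p hp => by simp)
  rw [hswap]
  have hsplit : (∑ p ∈ Finset.univ.filter (fun p : Fin m × Fin m => p.1 < p.2), F p)
      + (∑ p ∈ Finset.univ.filter (fun p : Fin m × Fin m => p.2 < p.1), F p)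
      = ∑ p ∈ Finset.univ.filter (fun p : Fin m × Fin m => p.1 ≠ p.2), F p := by
    rw [← Finset.sum_filter_add_sum_filter_not
      (Finset.univ.filter (fun p : Fin m × Fin m => p.1 ≠ p.2)) (fun p => p.1 < p.2) F]
    congr 1
    · congr 1
      rw [Finset.filter_filter]
      apply Finset.filter_congr
      intro p _
      constructor
      · intro h; exact ⟨ne_of_lt h, h⟩
      · intro h; exact h.2
    · congr 1
      rw [Finset.filter_filter]
      apply Finset.filter_congr
      intro p _
      constructor
      · intro h; exact ⟨ne_of_gt h, not_lt_of_gt h⟩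
      · intro h; exact lt_of_le_of_ne (not_lt.mp h.2) h.1.symm
  rw [hsplit]
  have hne_eq : (∑ p ∈ Finset.univ.filter (fun p : Fin m × Fin m => p.1 ≠ p.2), F p)
      = (∑ p : Fin m × Fin m, F p) - ∑ p ∈ Finset.univ.filter (fun p : Fin m × Fin m => p.1 = p.2), F p := by
    rw [eq_sub_iff_add_eq, ← Finset.sum_filter_add_sum_filter_not
      (Finset.univ : Finset (Fin m × Fin m)) (fun p => p.1 = p.2) F]
    exact add_comm _ _
  rw [hne_eq]
  have hdiag : (∑ p ∈ Finset.univ.filter (fun p : Fin m × Fin m => p.1 = p.2), F p)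
      = -∑ i, (x i) • g i := by
    rw [← Finset.sum_neg_distrib]
    refine (Finset.sum_nbij' (fun p : Fin m × Fin m => p.1) (fun i : Fin m => (i, i))
      ?_ ?_ ?_ ?_ ?_).symm.symm
    · intro p hp; simp
    · intro i _; simp
    · intro p hp
      simp only [Finset.mem_filter, Finset.mem_univ, true_and] at hp
      simp [Prod.ext_iff, hp]
    · intro i _; rfl
    · intro p hp
      simp only [Finset.mem_filter, Finset.mem_univ, true_and] at hp
      obtain ⟨i, k⟩ := p
      obtain rfl : i = k := hp
      simp only [hF]
      rw [← mul_assoc, eCl_sq, Algebra.algebraMap_eq_smul_one, smul_mul_assoc, one_mul,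
        neg_one_smul, smul_neg]
  rw [hdiag]
  have htot : (∑ p : Fin m × Fin m, F p)
      = toCl m x * (∑ k, eCl m k * g k) := by
    rw [Fintype.sum_prod_type, toCl_eq_sum, Finset.sum_mul]
    refine Finset.sum_congr rfl fun i _ => ?_
    rw [smul_mul_assoc, Finset.mul_sum, Finset.smul_sum]
  rw [htot]
  abel

/-- **The Cauchy kernel `G_s(x,y) = (x-y)/‖x-y‖ⁿ` on the sphere `Sⁿ ⊆ ℝ^{n+1}` is
annihilated by the spherical Dirac operator**: `Λ_n G_s(·,y) = -(n/2) G_s(·,y)` on `Sⁿ`,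
equivalently `x (Λ_n + n/2) G_s(x,y) = 0`. -/
theorem spherical_dirac_annihilates_cauchy_kernel (n : ℕ) (hn : 2 ≤ n)
    (y : Ev (n + 1)) (hy : y ∈ Metric.sphere (0 : Ev (n + 1)) 1) :
    ∀ x ∈ Metric.sphere (0 : Ev (n + 1)) 1, x ≠ y →
      (Lambda (n + 1) (fun z => (‖z - y‖ ^ n)⁻¹ • toCl (n + 1) (z - y)) x
          = (-((n : ℝ) / 2)) • ((‖x - y‖ ^ n)⁻¹ • toCl (n + 1) (x - y)))
      ∧ toCl (n + 1) x *
          (Lambda (n + 1) (fun z => (‖z - y‖ ^ n)⁻¹ • toCl (n + 1) (z - y)) x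
            + ((n : ℝ) / 2) • ((‖x - y‖ ^ n)⁻¹ • toCl (n + 1) (x - y))) = 0 := by
  intro x hx hxy
  have hn1 : 1 ≤ n := le_trans (by norm_num) hn
  have hx1 : ‖x‖ = 1 := by rwa [mem_sphere_zero_iff_norm] at hx
  have hy1 : ‖y‖ = 1 := by rwa [mem_sphere_zero_iff_norm] at hy
  have hr : (0:ℝ) < ‖x - y‖ := by rw [norm_pos_iff, sub_ne_zero]; exact hxy
  have hrne : ‖x - y‖ ≠ 0 := ne_of_gt hr
  set f : Ev (n+1) → Cl (n+1) := fun z => (‖z - y‖ ^ n)⁻¹ • toCl (n + 1) (z - y) with hf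
  set u : Cl (n+1) := toCl (n+1) (x - y) with hu
  set γ : ℝ := -(n:ℝ) * (‖x-y‖^(n+2))⁻¹ with hγdef
  set b : ℝ := (‖x-y‖^n)⁻¹ with hbdef
  -- inner product facts
  have ht : ‖x - y‖^2 = 2 - 2*⟪x,y⟫ := by
    rw [@norm_sub_sq_real, hx1, hy1]; ring
  have hinner2 : (∑ i, x i * ((x - y) i)) = ‖x - y‖^2 / 2 := by
    have h1 : (∑ i, x i * ((x - y) i)) = ⟪x, x - y⟫ := by
      simp [PiLp.inner_apply, RCLike.inner_apply, conj_trivial]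
      exact Finset.sum_congr rfl fun i _ => mul_comm _ _
    have h2 : ⟪x, x - y⟫ = 1 - ⟪x,y⟫ := by
      rw [inner_sub_right, real_inner_self_eq_norm_sq, hx1]; norm_num
    rw [h1, h2]; linarith
  -- the derivative values
  have hpd : ∀ i, pd (n+1) i f x = (γ * ((x - y) i)) • u + b • eCl (n+1) i := by
    intro i
    rw [hf, pd_kernel n hn1 y x hxy i, hu, hγdef, hbdef]
  -- split Lambda
  have h0 : Lambda (n+1) f x
      = toCl (n+1) x * (∑ k, eCl (n+1) k * pd (n+1) k f x) + ∑ i, x i • pd (n+1) i f x := by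
    rw [Lambda]
    exact lambda_split (n+1) x (fun i => pd (n+1) i f x)
  -- first sum
  have hS1 : (∑ k, eCl (n+1) k * pd (n+1) k f x) = algebraMap ℝ (Cl (n+1)) (-(‖x-y‖^n)⁻¹) := by
    have h1 : ∀ k : Fin (n+1), eCl (n+1) k * pd (n+1) k f x
        = ((γ * ((x - y) k)) • eCl (n+1) k) * u + b • algebraMap ℝ (Cl (n+1)) (-1) := by
      intro k
      rw [hpd k, mul_add, mul_smul_comm, mul_smul_comm, eCl_sq, ← smul_mul_assoc]
    rw [Finset.sum_congr rfl fun k _ => h1 k, Finset.sum_add_distrib, ← Finset.sum_mul]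
    have h2 : (∑ k, (γ * ((x - y) k)) • eCl (n+1) k) = γ • u := by
      rw [hu, toCl_eq_sum, Finset.smul_sum]
      exact Finset.sum_congr rfl fun k _ => (mul_smul γ _ _)
    rw [h2, Finset.sum_const, smul_mul_assoc, hu, toCl_sq]
    rw [Algebra.algebraMap_eq_smul_one, Algebra.algebraMap_eq_smul_one,
      Algebra.algebraMap_eq_smul_one, smul_smul, smul_smul,
      Finset.card_univ, Fintype.card_fin, ← Nat.cast_smul_eq_nsmul ℝ, smul_smul, ← add_smul]
    congr 1
    rw [hγdef, hbdef]
    have hp : (‖x-y‖:ℝ)^(n+2) = ‖x-y‖^n * ‖x-y‖^2 := pow_add _ _ _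
    field_simp
    push_cast
    ring
  -- second sum
  have hS2 : (∑ i, x i • pd (n+1) i f x) = (γ * (‖x-y‖^2/2)) • u + b • toCl (n+1) x := by
    have h1 : ∀ i : Fin (n+1), x i • pd (n+1) i f x
        = (x i * (γ * ((x - y) i))) • u + b • (x i • eCl (n+1) i) := by
      intro i
      rw [hpd i, smul_add, smul_smul, smul_comm (x i) b]
    rw [Finset.sum_congr rfl fun i _ => h1 i, Finset.sum_add_distrib, ← Finset.sum_smul,
      ← Finset.smul_sum, ← toCl_eq_sum]
    congr 2
    rw [← hinner2, Finset.mul_sum]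
    exact Finset.sum_congr rfl fun i _ => by ring
  -- assemble
  have hγ2 : γ * (‖x-y‖^2/2) = -((n:ℝ)/2) * (‖x-y‖^n)⁻¹ := by
    rw [hγdef]
    have hp : (‖x-y‖:ℝ)^(n+2) = ‖x-y‖^n * ‖x-y‖^2 := pow_add _ _ _
    field_simp
    ring
  have hmain : Lambda (n+1) f x = (-((n:ℝ)/2)) • ((‖x-y‖^n)⁻¹ • u) := by
    rw [h0, hS1, hS2, hγ2]
    have hc : toCl (n+1) x * algebraMap ℝ (Cl (n+1)) (-(‖x-y‖^n)⁻¹)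
        = (-(‖x-y‖^n)⁻¹) • toCl (n+1) x := by
      rw [Algebra.algebraMap_eq_smul_one, mul_smul_comm, mul_one]
    rw [hc, hbdef, smul_smul]
    module
  refine ⟨hmain, ?_⟩
  rw [hmain]
  have : (-((n:ℝ)/2)) • ((‖x-y‖^n)⁻¹ • u) + ((n:ℝ)/2) • ((‖x-y‖^n)⁻¹ • u) = 0 := by
    module
  rw [this, mul_zero]

end
end
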